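/- For arbitrary binary matrices A and A', bp_f(A ⊗ A') ≥ max{bc_f(A)·bp_f(A'), bp_f(A)·bc_f(A')}. -/

import Mathlib

open Matrix Kronecker BigOperators Filter

/-- A real matrix is binary if every entry is 0 or 1. -/
def IsBinary {m n : Type*} (A : Matrix m n ℝ) : Prop :=
  ∀ i j, A i j = 0 ∨ A i j = 1

/-- A biclique of the bipartite graph of `A`: a pair of nonempty vertex sets with all
edges present. -/
def IsBiclique {m n : Type*} (A : Matrix m n ℝ) (B : Finset m × Finset n) : Prop :=
  B.1.Nonempty ∧ B.2.Nonempty ∧ ∀ i ∈ B.1, ∀ j ∈ B.2, A i j = 1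

/-- A family of bicliques partitioning the edge set of the bipartite graph of `A`. -/
def IsBicliquePartition {m n : Type*} (A : Matrix m n ℝ) {r : ℕ}
    (B : Fin r → Finset m × Finset n) : Prop :=
  (∀ t, IsBiclique A (B t)) ∧ ∀ i j, A i j = 1 → ∃! t, i ∈ (B t).1 ∧ j ∈ (B t).2

/-- A family of bicliques covering the edge set of the bipartite graph of `A`. -/
def IsBicliqueCover {m n : Type*} (A : Matrix m n ℝ) {r : ℕ}
    (B : Fin r → Finset m × Finset n) : Prop :=
  (∀ t, IsBiclique A (B t)) ∧ ∀ i j, A i j = 1 → ∃ t, i ∈ (B t).1 ∧ j ∈ (B t).2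

/-- Biclique partition number. -/
noncomputable def bp {m n : Type*} (A : Matrix m n ℝ) : ℕ :=
  sInf { r : ℕ | ∃ B : Fin r → Finset m × Finset n, IsBicliquePartition A B }

/-- Biclique cover number. -/
noncomputable def bc {m n : Type*} (A : Matrix m n ℝ) : ℕ :=
  sInf { r : ℕ | ∃ B : Fin r → Finset m × Finset n, IsBicliqueCover A B }

/-- Binary rank: minimal `r` admitting a binary factorization `A = U * V`. -/
noncomputable def binRank {m n : Type*} [Fintype m] [Fintype n] (A : Matrix m n ℝ) : ℕ :=
  sInf { r : ℕ | ∃ U : Matrix m (Fin r) ℝ, ∃ V : Matrix (Fin r) n ℝ,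
    IsBinary U ∧ IsBinary V ∧ U * V = A }

/-- Fractional biclique partition number. -/
noncomputable def bpf {m n : Type*} [Fintype m] [Fintype n] [DecidableEq m] [DecidableEq n]
    (A : Matrix m n ℝ) : ℝ :=
  sInf { c : ℝ | ∃ x : Finset m × Finset n → ℝ,
    (∀ B, 0 ≤ x B) ∧ (∀ B, ¬ IsBiclique A B → x B = 0) ∧
    (∀ i j, A i j = 1 →
      ∑ B : Finset m × Finset n, (if i ∈ B.1 ∧ j ∈ B.2 then x B else 0) = 1) ∧
    c = ∑ B : Finset m × Finset n, x B }

/-- Fractional biclique cover number. -/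
noncomputable def bcf {m n : Type*} [Fintype m] [Fintype n] [DecidableEq m] [DecidableEq n]
    (A : Matrix m n ℝ) : ℝ :=
  sInf { c : ℝ | ∃ x : Finset m × Finset n → ℝ,
    (∀ B, 0 ≤ x B) ∧ (∀ B, ¬ IsBiclique A B → x B = 0) ∧
    (∀ i j, A i j = 1 →
      1 ≤ ∑ B : Finset m × Finset n, (if i ∈ B.1 ∧ j ∈ B.2 then x B else 0)) ∧
    c = ∑ B : Finset m × Finset n, x B }

/-- `k`-th Kronecker power of `A`, indexed by tuples. -/
noncomputable def kronPow {m n : Type*} (A : Matrix m n ℝ) (k : ℕ) :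
    Matrix (Fin k → m) (Fin k → n) ℝ :=
  fun i j => ∏ t, A (i t) (j t)

/-- The bipartite adjacency matrix of the Domino graph. -/
noncomputable def D : Matrix (Fin 3) (Fin 3) ℝ := !![1,1,0;1,1,1;0,1,1]

section Aux

open scoped Classical

/-- Section of a set of pairs at a fixed first coordinate. -/
noncomputable def sect1 {α β : Type*} [Fintype β] (i : α) (S : Finset (α × β)) : Finset β :=
  Finset.univ.filter (fun b => (i, b) ∈ S)

/-- Section of a set of pairs at a fixed second coordinate. -/
noncomputable def sect2 {α β : Type*} [Fintype α] (b : β) (S : Finset (α × β)) : Finset α :=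
  Finset.univ.filter (fun a => (a, b) ∈ S)

lemma mem_sect1 {α β : Type*} [Fintype β] {i : α} {S : Finset (α × β)} {b : β} :
    b ∈ sect1 i S ↔ (i, b) ∈ S := by simp [sect1]

lemma mem_sect2 {α β : Type*} [Fintype α] {b : β} {S : Finset (α × β)} {a : α} :
    a ∈ sect2 b S ↔ (a, b) ∈ S := by simp [sect2]

lemma binary_mul_eq_one {a b : ℝ} (ha : a = 0 ∨ a = 1) (hb : b = 0 ∨ b = 1)
    (h : a * b = 1) : a = 1 ∧ b = 1 := by
  rcases ha with ha | ha <;> rcases hb with hb | hb <;> simp [ha, hb] at h ⊢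

lemma collapse {α β : Type*} [Fintype α] [Fintype β] [DecidableEq β]
    (f : α → β) (P : β → Prop) [DecidablePred P] (x : α → ℝ) :
    ∑ b : β, (if P b then ∑ a : α, (if f a = b then x a else 0) else 0)
      = ∑ a : α, if P (f a) then x a else 0 := by
  calc ∑ b : β, (if P b then ∑ a : α, (if f a = b then x a else 0) else 0)
      = ∑ b : β, ∑ a : α, (if P b ∧ f a = b then x a else 0) := by
        refine Finset.sum_congr rfl fun b _ => ?_
        split_ifs with h
        · exact Finset.sum_congr rfl fun a _ => by simp [h]
        · exact (Finset.sum_eq_zero fun a _ => by simp [h]).symm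
    _ = ∑ a : α, ∑ b : β, (if P b ∧ f a = b then x a else 0) := Finset.sum_comm
    _ = ∑ a : α, if P (f a) then x a else 0 := by
        refine Finset.sum_congr rfl fun a _ => ?_
        rw [Finset.sum_eq_single (f a)]
        · simp
        · intro b _ hb
          exact if_neg fun hc => hb hc.2.symm
        · intro h; exact absurd (Finset.mem_univ _) h

lemma collapse' {α β : Type*} [Fintype α] [Fintype β] [DecidableEq β]
    (f : α → β) (x : α → ℝ) :
    ∑ b : β, (∑ a : α, (if f a = b then x a else 0)) = ∑ a : α, x a := by
  have := collapse f (fun _ => True) x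
  simpa using this

section LP

variable {m n : Type*} [Fintype m] [Fintype n] [DecidableEq m] [DecidableEq n]

lemma bpf_le (A : Matrix m n ℝ) {c : ℝ}
    (hc : ∃ x : Finset m × Finset n → ℝ,
      (∀ B, 0 ≤ x B) ∧ (∀ B, ¬ IsBiclique A B → x B = 0) ∧
      (∀ i j, A i j = 1 →
        ∑ B : Finset m × Finset n, (if i ∈ B.1 ∧ j ∈ B.2 then x B else 0) = 1) ∧
      c = ∑ B : Finset m × Finset n, x B) : bpf A ≤ c :=
  csInf_le ⟨0, by
    rintro d ⟨x, h0, -, -, rfl⟩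
    exact Finset.sum_nonneg fun B _ => h0 B⟩ hc

lemma bcf_le (A : Matrix m n ℝ) {c : ℝ}
    (hc : ∃ x : Finset m × Finset n → ℝ,
      (∀ B, 0 ≤ x B) ∧ (∀ B, ¬ IsBiclique A B → x B = 0) ∧
      (∀ i j, A i j = 1 →
        1 ≤ ∑ B : Finset m × Finset n, (if i ∈ B.1 ∧ j ∈ B.2 then x B else 0)) ∧
      c = ∑ B : Finset m × Finset n, x B) : bcf A ≤ c :=
  csInf_le ⟨0, by
    rintro d ⟨x, h0, -, -, rfl⟩
    exact Finset.sum_nonneg fun B _ => h0 B⟩ hc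

lemma bpf_nonneg (A : Matrix m n ℝ) : 0 ≤ bpf A := by
  apply Real.sInf_nonneg
  rintro d ⟨x, h0, -, -, rfl⟩
  exact Finset.sum_nonneg fun B _ => h0 B

lemma feas_nonempty (M : Matrix m n ℝ) :
    { c : ℝ | ∃ x : Finset m × Finset n → ℝ,
      (∀ B, 0 ≤ x B) ∧ (∀ B, ¬ IsBiclique M B → x B = 0) ∧
      (∀ i j, M i j = 1 →
        ∑ B : Finset m × Finset n, (if i ∈ B.1 ∧ j ∈ B.2 then x B else 0) = 1) ∧
      c = ∑ B : Finset m × Finset n, x B }.Nonempty := by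
  refine ⟨_, fun B => if ∃ i j, B = ({i}, {j}) ∧ M i j = 1 then (1 : ℝ) else 0,
    ?_, ?_, ?_, rfl⟩
  · intro B; beta_reduce; split <;> norm_num
  · intro B hB
    beta_reduce
    rw [if_neg]
    rintro ⟨i, j, rfl, hij⟩
    refine hB ⟨⟨i, Finset.mem_singleton_self i⟩, ⟨j, Finset.mem_singleton_self j⟩, ?_⟩
    intro a ha b hb
    simp only [Finset.mem_singleton] at ha hb
    subst ha; subst hb; exact hij
  · intro i j hij
    beta_reduce
    rw [Finset.sum_eq_single (({i} : Finset m), ({j} : Finset n))]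
    · rw [if_pos ⟨Finset.mem_singleton_self i, Finset.mem_singleton_self j⟩,
        if_pos ⟨i, j, rfl, hij⟩]
    · intro B _ hBne
      beta_reduce
      split_ifs with h1 h2
      · exfalso
        obtain ⟨i', j', hB, -⟩ := h2
        apply hBne
        subst hB
        simp only [Finset.mem_singleton] at h1
        rw [h1.1, h1.2]
      · rfl
      · rfl
    · intro h; exact absurd (Finset.mem_univ _) h

end LP

section Key

variable {m n m' n' : Type*} [Fintype m] [Fintype n] [Fintype m'] [Fintype n']
  [DecidableEq m] [DecidableEq n] [DecidableEq m'] [DecidableEq n']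

set_option maxHeartbeats 1000000 in
lemma key (A : Matrix m n ℝ) (A' : Matrix m' n' ℝ) (hA : IsBinary A) (hA' : IsBinary A')
    (x : Finset (m × m') × Finset (n × n') → ℝ)
    (hx0 : ∀ B, 0 ≤ x B)
    (hxs : ∀ B, ¬ IsBiclique (A ⊗ₖ A') B → x B = 0)
    (hxc : ∀ p q, (A ⊗ₖ A') p q = 1 →
      ∑ B : Finset (m × m') × Finset (n × n'),
        (if p ∈ B.1 ∧ q ∈ B.2 then x B else 0) = 1) :
    bcf A * bpf A' ≤ ∑ B : Finset (m × m') × Finset (n × n'), x B := by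
  have hsum0 : (0 : ℝ) ≤ ∑ B : Finset (m × m') × Finset (n × n'), x B :=
    Finset.sum_nonneg fun B _ => hx0 B
  have hbic : ∀ B, x B ≠ 0 → IsBiclique (A ⊗ₖ A') B := fun B h => by
    by_contra hb; exact h (hxs B hb)
  rcases eq_or_lt_of_le (bpf_nonneg A') with hp | hp
  · rw [← hp, mul_zero]; exact hsum0
  · -- main claim: for each edge (i,j) of A, the mass of bicliques meeting row-slice i
    -- and column-slice j is at least bpf A'
    have claim : ∀ i j, A i j = 1 →
        bpf A' ≤ ∑ B : Finset (m × m') × Finset (n × n'),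
          (if (sect1 i B.1).Nonempty ∧ (sect1 j B.2).Nonempty then x B else 0) := by
      intro i j hij
      apply bpf_le
      refine ⟨fun B' => if B'.1.Nonempty ∧ B'.2.Nonempty then
          ∑ B : Finset (m × m') × Finset (n × n'),
            (if (sect1 i B.1, sect1 j B.2) = B' then x B else 0) else 0,
        ?_, ?_, ?_, ?_⟩
      · intro B'
        beta_reduce
        split
        · exact Finset.sum_nonneg fun B _ => by split_ifs <;> simp [hx0 B]
        · exact le_refl 0
      · intro B' hB'
        beta_reduce
        split_ifs with hne
        · refine Finset.sum_eq_zero fun B _ => ?_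
          split_ifs with hproj
          · by_contra hxB
            apply hB'
            obtain ⟨hB1, hB2, hBall⟩ := hbic B hxB
            refine ⟨hne.1, hne.2, fun i' hi' j' hj' => ?_⟩
            rw [← hproj] at hi' hj'
            have h1 : (i, i') ∈ B.1 := mem_sect1.mp hi'
            have h2 : (j, j') ∈ B.2 := mem_sect1.mp hj'
            have hone := hBall _ h1 _ h2
            rw [Matrix.kroneckerMap_apply] at hone
            exact (binary_mul_eq_one (hA i j) (hA' i' j') hone).2
          · rfl
        · rfl
      · intro i' j' hij'
        have hM : (A ⊗ₖ A') (i, i') (j, j') = 1 := by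
          rw [Matrix.kroneckerMap_apply, hij, hij', one_mul]
        rw [← hxc _ _ hM]
        beta_reduce
        have step1 : ∀ B' : Finset m' × Finset n',
            (if i' ∈ B'.1 ∧ j' ∈ B'.2 then
              (if B'.1.Nonempty ∧ B'.2.Nonempty then
                ∑ B : Finset (m × m') × Finset (n × n'),
                  (if (sect1 i B.1, sect1 j B.2) = B' then x B else 0) else 0) else 0)
            = (if i' ∈ B'.1 ∧ j' ∈ B'.2 then
                ∑ B : Finset (m × m') × Finset (n × n'),
                  (if (sect1 i B.1, sect1 j B.2) = B' then x B else 0) else 0) := by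
          intro B'
          by_cases hR : i' ∈ B'.1 ∧ j' ∈ B'.2
          · rw [if_pos hR, if_pos hR, if_pos ⟨⟨i', hR.1⟩, ⟨j', hR.2⟩⟩]
          · rw [if_neg hR, if_neg hR]
        rw [Finset.sum_congr rfl fun B' _ => step1 B',
          collapse (fun B => (sect1 i B.1, sect1 j B.2))
            (fun B' => i' ∈ B'.1 ∧ j' ∈ B'.2) x]
        refine Finset.sum_congr rfl fun B _ => ?_
        refine if_congr ?_ rfl rfl
        constructor
        · rintro ⟨h1, h2⟩; exact ⟨mem_sect1.mp h1, mem_sect1.mp h2⟩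
        · rintro ⟨h1, h2⟩; exact ⟨mem_sect1.mpr h1, mem_sect1.mpr h2⟩
      · have hh := (collapse (fun B => (sect1 i B.1, sect1 j B.2))
          (fun B' => B'.1.Nonempty ∧ B'.2.Nonempty) x).symm
        dsimp only at hh ⊢
        exact hh
    -- construct a fractional cover of A
    have hcov : bcf A ≤ (∑ B : Finset (m × m') × Finset (n × n'), x B) / bpf A' := by
      apply bcf_le
      refine ⟨fun C => (∑ B : Finset (m × m') × Finset (n × n'),
          (if (B.1.image Prod.fst, B.2.image Prod.fst) = C then x B else 0)) / bpf A',
        ?_, ?_, ?_, ?_⟩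
      · intro C
        beta_reduce
        exact div_nonneg (Finset.sum_nonneg fun B _ => by split_ifs <;> simp [hx0 B]) hp.le
      · intro C hC
        beta_reduce
        rw [div_eq_zero_iff]; left
        refine Finset.sum_eq_zero fun B _ => ?_
        split_ifs with hproj
        · by_contra hxB
          apply hC
          obtain ⟨hB1, hB2, hBall⟩ := hbic B hxB
          rw [← hproj]
          refine ⟨hB1.image _, hB2.image _, ?_⟩
          intro a ha b hb
          simp only [Finset.mem_image] at ha hb
          obtain ⟨⟨a1, a2⟩, hmem, rfl⟩ := ha
          obtain ⟨⟨b1, b2⟩, hmem', rfl⟩ := hb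
          have hone := hBall _ hmem _ hmem'
          rw [Matrix.kroneckerMap_apply] at hone
          exact (binary_mul_eq_one (hA _ _) (hA' _ _) hone).1
        · rfl
      · intro i j hij
        show 1 ≤ ∑ C : Finset m × Finset n,
            (if i ∈ C.1 ∧ j ∈ C.2 then
              (∑ B : Finset (m × m') × Finset (n × n'),
                (if (B.1.image Prod.fst, B.2.image Prod.fst) = C then x B else 0)) / bpf A'
              else 0)
        have e2 : ∀ C : Finset m × Finset n,
            (if i ∈ C.1 ∧ j ∈ C.2 then
              (∑ B : Finset (m × m') × Finset (n × n'),
                (if (B.1.image Prod.fst, B.2.image Prod.fst) = C then x B else 0)) / bpf A'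
              else 0)
            = (if i ∈ C.1 ∧ j ∈ C.2 then
                ∑ B : Finset (m × m') × Finset (n × n'),
                  (if (B.1.image Prod.fst, B.2.image Prod.fst) = C then x B else 0)
                else 0) / bpf A' := fun C => by
          split_ifs <;> simp
        rw [Finset.sum_congr rfl fun C _ => e2 C, ← Finset.sum_div,
          collapse (fun B : Finset (m × m') × Finset (n × n') =>
              (B.1.image Prod.fst, B.2.image Prod.fst))
            (fun C => i ∈ C.1 ∧ j ∈ C.2) x]
        have e3 : ∑ B : Finset (m × m') × Finset (n × n'),
            (if i ∈ B.1.image Prod.fst ∧ j ∈ B.2.image Prod.fst then x B else 0)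
            = ∑ B : Finset (m × m') × Finset (n × n'),
              (if (sect1 i B.1).Nonempty ∧ (sect1 j B.2).Nonempty then x B else 0) := by
          refine Finset.sum_congr rfl fun B _ => if_congr ?_ rfl rfl
          constructor
          · rintro ⟨h1, h2⟩
            simp only [Finset.mem_image] at h1 h2
            obtain ⟨⟨a1, a2⟩, ha, rfl⟩ := h1
            obtain ⟨⟨b1, b2⟩, hb, rfl⟩ := h2
            exact ⟨⟨a2, mem_sect1.mpr ha⟩, ⟨b2, mem_sect1.mpr hb⟩⟩
          · rintro ⟨⟨i', hi'⟩, ⟨j', hj'⟩⟩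
            exact ⟨Finset.mem_image.mpr ⟨(i, i'), mem_sect1.mp hi', rfl⟩,
              Finset.mem_image.mpr ⟨(j, j'), mem_sect1.mp hj', rfl⟩⟩
        rw [e3]
        exact (one_le_div hp).mpr (claim i j hij)
      · show (∑ B : Finset (m × m') × Finset (n × n'), x B) / bpf A'
            = ∑ C : Finset m × Finset n,
              (∑ B : Finset (m × m') × Finset (n × n'),
                (if (B.1.image Prod.fst, B.2.image Prod.fst) = C then x B else 0)) / bpf A'
        rw [← Finset.sum_div, collapse']
    exact (le_div_iff₀ hp).mp hcov

set_option maxHeartbeats 1000000 in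
lemma key2 (A : Matrix m n ℝ) (A' : Matrix m' n' ℝ) (hA : IsBinary A) (hA' : IsBinary A')
    (x : Finset (m × m') × Finset (n × n') → ℝ)
    (hx0 : ∀ B, 0 ≤ x B)
    (hxs : ∀ B, ¬ IsBiclique (A ⊗ₖ A') B → x B = 0)
    (hxc : ∀ p q, (A ⊗ₖ A') p q = 1 →
      ∑ B : Finset (m × m') × Finset (n × n'),
        (if p ∈ B.1 ∧ q ∈ B.2 then x B else 0) = 1) :
    bpf A * bcf A' ≤ ∑ B : Finset (m × m') × Finset (n × n'), x B := by
  have hsum0 : (0 : ℝ) ≤ ∑ B : Finset (m × m') × Finset (n × n'), x B :=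
    Finset.sum_nonneg fun B _ => hx0 B
  have hbic : ∀ B, x B ≠ 0 → IsBiclique (A ⊗ₖ A') B := fun B h => by
    by_contra hb; exact h (hxs B hb)
  rcases eq_or_lt_of_le (bpf_nonneg A) with hp | hp
  · rw [← hp, zero_mul]; exact hsum0
  · have claim : ∀ i' j', A' i' j' = 1 →
        bpf A ≤ ∑ B : Finset (m × m') × Finset (n × n'),
          (if (sect2 i' B.1).Nonempty ∧ (sect2 j' B.2).Nonempty then x B else 0) := by
      intro i' j' hij'
      apply bpf_le
      refine ⟨fun B' => if B'.1.Nonempty ∧ B'.2.Nonempty then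
          ∑ B : Finset (m × m') × Finset (n × n'),
            (if (sect2 i' B.1, sect2 j' B.2) = B' then x B else 0) else 0,
        ?_, ?_, ?_, ?_⟩
      · intro B'
        beta_reduce
        split
        · exact Finset.sum_nonneg fun B _ => by split_ifs <;> simp [hx0 B]
        · exact le_refl 0
      · intro B' hB'
        beta_reduce
        split_ifs with hne
        · refine Finset.sum_eq_zero fun B _ => ?_
          split_ifs with hproj
          · by_contra hxB
            apply hB'
            obtain ⟨hB1, hB2, hBall⟩ := hbic B hxB
            refine ⟨hne.1, hne.2, fun i hi j hj => ?_⟩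
            rw [← hproj] at hi hj
            have h1 : (i, i') ∈ B.1 := mem_sect2.mp hi
            have h2 : (j, j') ∈ B.2 := mem_sect2.mp hj
            have hone := hBall _ h1 _ h2
            rw [Matrix.kroneckerMap_apply] at hone
            exact (binary_mul_eq_one (hA i j) (hA' i' j') hone).1
          · rfl
        · rfl
      · intro i j hij
        have hM : (A ⊗ₖ A') (i, i') (j, j') = 1 := by
          rw [Matrix.kroneckerMap_apply, hij, hij', one_mul]
        rw [← hxc _ _ hM]
        beta_reduce
        have step1 : ∀ B' : Finset m × Finset n,
            (if i ∈ B'.1 ∧ j ∈ B'.2 then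
              (if B'.1.Nonempty ∧ B'.2.Nonempty then
                ∑ B : Finset (m × m') × Finset (n × n'),
                  (if (sect2 i' B.1, sect2 j' B.2) = B' then x B else 0) else 0) else 0)
            = (if i ∈ B'.1 ∧ j ∈ B'.2 then
                ∑ B : Finset (m × m') × Finset (n × n'),
                  (if (sect2 i' B.1, sect2 j' B.2) = B' then x B else 0) else 0) := by
          intro B'
          by_cases hR : i ∈ B'.1 ∧ j ∈ B'.2
          · rw [if_pos hR, if_pos hR, if_pos ⟨⟨i, hR.1⟩, ⟨j, hR.2⟩⟩]
          · rw [if_neg hR, if_neg hR]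
        rw [Finset.sum_congr rfl fun B' _ => step1 B',
          collapse (fun B => (sect2 i' B.1, sect2 j' B.2))
            (fun B' => i ∈ B'.1 ∧ j ∈ B'.2) x]
        refine Finset.sum_congr rfl fun B _ => ?_
        refine if_congr ?_ rfl rfl
        constructor
        · rintro ⟨h1, h2⟩; exact ⟨mem_sect2.mp h1, mem_sect2.mp h2⟩
        · rintro ⟨h1, h2⟩; exact ⟨mem_sect2.mpr h1, mem_sect2.mpr h2⟩
      · have hh := (collapse (fun B => (sect2 i' B.1, sect2 j' B.2))
          (fun B' => B'.1.Nonempty ∧ B'.2.Nonempty) x).symm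
        dsimp only at hh ⊢
        exact hh
    have hcov : bcf A' ≤ (∑ B : Finset (m × m') × Finset (n × n'), x B) / bpf A := by
      apply bcf_le
      refine ⟨fun C => (∑ B : Finset (m × m') × Finset (n × n'),
          (if (B.1.image Prod.snd, B.2.image Prod.snd) = C then x B else 0)) / bpf A,
        ?_, ?_, ?_, ?_⟩
      · intro C
        beta_reduce
        exact div_nonneg (Finset.sum_nonneg fun B _ => by split_ifs <;> simp [hx0 B]) hp.le
      · intro C hC
        beta_reduce
        rw [div_eq_zero_iff]; left
        refine Finset.sum_eq_zero fun B _ => ?_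
        split_ifs with hproj
        · by_contra hxB
          apply hC
          obtain ⟨hB1, hB2, hBall⟩ := hbic B hxB
          rw [← hproj]
          refine ⟨hB1.image _, hB2.image _, ?_⟩
          intro a ha b hb
          simp only [Finset.mem_image] at ha hb
          obtain ⟨⟨a1, a2⟩, hmem, rfl⟩ := ha
          obtain ⟨⟨b1, b2⟩, hmem', rfl⟩ := hb
          have hone := hBall _ hmem _ hmem'
          rw [Matrix.kroneckerMap_apply] at hone
          exact (binary_mul_eq_one (hA _ _) (hA' _ _) hone).2
        · rfl
      · intro i' j' hij'
        show 1 ≤ ∑ C : Finset m' × Finset n',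
            (if i' ∈ C.1 ∧ j' ∈ C.2 then
              (∑ B : Finset (m × m') × Finset (n × n'),
                (if (B.1.image Prod.snd, B.2.image Prod.snd) = C then x B else 0)) / bpf A
              else 0)
        have e2 : ∀ C : Finset m' × Finset n',
            (if i' ∈ C.1 ∧ j' ∈ C.2 then
              (∑ B : Finset (m × m') × Finset (n × n'),
                (if (B.1.image Prod.snd, B.2.image Prod.snd) = C then x B else 0)) / bpf A
              else 0)
            = (if i' ∈ C.1 ∧ j' ∈ C.2 then
                ∑ B : Finset (m × m') × Finset (n × n'),
                  (if (B.1.image Prod.snd, B.2.image Prod.snd) = C then x B else 0)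
                else 0) / bpf A := fun C => by
          split_ifs <;> simp
        rw [Finset.sum_congr rfl fun C _ => e2 C, ← Finset.sum_div,
          collapse (fun B : Finset (m × m') × Finset (n × n') =>
              (B.1.image Prod.snd, B.2.image Prod.snd))
            (fun C => i' ∈ C.1 ∧ j' ∈ C.2) x]
        have e3 : ∑ B : Finset (m × m') × Finset (n × n'),
            (if i' ∈ B.1.image Prod.snd ∧ j' ∈ B.2.image Prod.snd then x B else 0)
            = ∑ B : Finset (m × m') × Finset (n × n'),
              (if (sect2 i' B.1).Nonempty ∧ (sect2 j' B.2).Nonempty then x B else 0) := by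
          refine Finset.sum_congr rfl fun B _ => if_congr ?_ rfl rfl
          constructor
          · rintro ⟨h1, h2⟩
            simp only [Finset.mem_image] at h1 h2
            obtain ⟨⟨a1, a2⟩, ha, rfl⟩ := h1
            obtain ⟨⟨b1, b2⟩, hb, rfl⟩ := h2
            exact ⟨⟨a1, mem_sect2.mpr ha⟩, ⟨b1, mem_sect2.mpr hb⟩⟩
          · rintro ⟨⟨i, hi⟩, ⟨j, hj⟩⟩
            exact ⟨Finset.mem_image.mpr ⟨(i, i'), mem_sect2.mp hi, rfl⟩,
              Finset.mem_image.mpr ⟨(j, j'), mem_sect2.mp hj, rfl⟩⟩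
        rw [e3]
        exact (one_le_div hp).mpr (claim i' j' hij')
      · show (∑ B : Finset (m × m') × Finset (n × n'), x B) / bpf A
            = ∑ C : Finset m' × Finset n',
              (∑ B : Finset (m × m') × Finset (n × n'),
                (if (B.1.image Prod.snd, B.2.image Prod.snd) = C then x B else 0)) / bpf A
        rw [← Finset.sum_div, collapse']
    rw [mul_comm]
    exact (le_div_iff₀ hp).mp hcov


end Key

/-- Lower bound: `bpf (A ⊗ A') ≥ max (bcf A * bpf A') (bpf A * bcf A')`. -/
theorem bpf_kronecker_ge_max {m n m' n' : Type*}
    [Fintype m] [Fintype n] [Fintype m'] [Fintype n']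
    [DecidableEq m] [DecidableEq n] [DecidableEq m'] [DecidableEq n']
    (A : Matrix m n ℝ) (A' : Matrix m' n' ℝ)
    (hA : IsBinary A) (hA' : IsBinary A') :
    bpf (A ⊗ₖ A') ≥ max (bcf A * bpf A') (bpf A * bcf A') := by
  rw [ge_iff_le, max_le_iff]
  have hne := feas_nonempty (A ⊗ₖ A')
  constructor
  · refine le_csInf hne ?_
    rintro c ⟨x, h0, hs, hc, rfl⟩
    exact key A A' hA hA' x h0 hs hc
  · refine le_csInf hne ?_
    rintro c ⟨x, h0, hs, hc, rfl⟩
    exact key2 A A' hA hA' x h0 hs hc
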